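/- Let D := {(x̄, x̃) ∈ ℝ² : x̃ ≥ −x̄²}. Let b(x̄, x̃) = (b̄⁰ + b̄¹x̄, b̃⁰ + b̃¹x̄ + b̃²x̃) (so the first component is affine in x̄ only) and let C : ℝ² → S² be a polynomial of degree at most 2, C(x̄, x̃) = A⁰ + A¹x̄ + A²x̃ + A³x̄² + A⁴x̄x̃ + A⁵x̃² with Aⁱ ∈ S², whose (1,1)-entry C₁₁ is an affine function of x̄ alone. Then the following are equivalent. (I) C(x) is positive semidefinite for every x ∈ D, and for every x̄ ∈ ℝ, with x := (x̄, −x̄²) and w := (2x̄, 1): C(x)w = 0 and ⟨w, b(x)⟩ − (𝟙_{C₁₁(x) ≠ 0} / (2(4x̄² + 1))) · ( 2x̄ ∂_w(C₁₁ − C₂₂)(x) + (1 − 4x̄²) ∂_w C₁₂(x) ) ≥ 0, where ∂_w := ∂₁ − 2x̄ ∂₂. (II) There exist α ≥ 0 and β ≥ 0 such that C(x̄, x̃) = [[α, −2αx̄], [−2αx̄, (4α + β)x̄² + βx̃]] for all (x̄, x̃) ∈ ℝ², and either [b̃² < 2b̄¹ and (b̃¹ + 2b̄⁰)² ≤ 4(2b̄¹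 − b̃²)(b̃⁰ + α)] or [b̃² = 2b̄¹, b̃¹ = −2b̄⁰ and b̃⁰ ≥ −α]. -/

import Mathlib

/-!
On the boundary point `(x̄, -x̄²)` the kernel condition `C w = 0` says, row by row,
`C₁₂ = -2x̄ C₁₁` and `C₂₂ = -2x̄ C₁₂`. Since `C₁₁` is affine in `x̄` and nonnegative on `D`, it is a
constant `α ≥ 0`, and comparing coefficients of these quartic identities in `x̄` fixes `C₁₂` and
`C₂₂` up to multiples of `x̃ + x̄²`. Positive semidefiniteness at `(0, T)` for large `T` kills the
`x̃`-term of `C₁₂`. Conversely the resulting matrix is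
`α (1, -2x̄)(1, -2x̄)ᵀ + β (x̃ + x̄²) e₂e₂ᵀ`, positive semidefinite on `D`. For it the derivative
correction in the drift condition equals `-α 𝟙_{α ≠ 0} = -α`, so the drift condition says that
`(2b̄¹ - b̃²) x̄² + (b̃¹ + 2b̄⁰) x̄ + b̃⁰ + α ≥ 0` for all `x̄`, which is the stated dichotomy.
-/

open Matrix Set Asymptotics
open scoped RealInnerProductSpace NNReal

noncomputable section

/-- `ℝ^d` with the Euclidean inner product and norm. -/
abbrev Vec (d : ℕ) := EuclideanSpace ℝ (Fin d)

/-- real `d × d` matrices. -/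
abbrev Mat (d : ℕ) := Matrix (Fin d) (Fin d) ℝ

attribute [local instance] Matrix.normedAddCommGroup Matrix.normedSpace

/-- A matrix acting on a vector of `ℝ^d`. -/
def mv {d : ℕ} (A : Mat d) (u : Vec d) : Vec d := WithLp.toLp 2 (A.mulVec u)

/-- The `j`-th canonical basis vector of `ℝ^d`. -/
def evec {d : ℕ} (j : Fin d) : Vec d := EuclideanSpace.single j 1

/-- The first-order normal cone `N¹_D(x)`. -/
def normalCone1 {d : ℕ} (D : Set (Vec d)) (x : Vec d) : Set (Vec d) :=
  {u | ∀ ε > (0:ℝ), ∃ δ > (0:ℝ), ∀ y ∈ D, ‖y - x‖ ≤ δ → ⟪u, y - x⟫ ≤ ε * ‖y - x‖}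

/-- The second-order normal cone `N²_D(x) ⊆ ℝ^d × S^d`. -/
def normalCone2 {d : ℕ} (D : Set (Vec d)) (x : Vec d) : Set (Vec d × Mat d) :=
  {p | p.2.IsSymm ∧ ∀ ε > (0:ℝ), ∃ δ > (0:ℝ), ∀ y ∈ D, ‖y - x‖ ≤ δ →
    ⟪p.1, y - x⟫ + (1/2:ℝ) * ⟪y - x, mv p.2 (y - x)⟫ ≤ ε * ‖y - x‖^2}

/-- The first-order normal cone for subsets of `ℝ`. -/
def normalConeR (D : Set ℝ) (x : ℝ) : Set ℝ :=
  {u | ∀ ε > (0:ℝ), ∃ δ > (0:ℝ), ∀ y ∈ D, |y - x| ≤ δ → u * (y - x) ≤ ε * |y - x|}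

/-- The matrix of the orthogonal projection of `ℝ^d` onto the column space (range) of `A`,
i.e. `A A⁺` with `A⁺` the Moore–Penrose pseudoinverse. -/
def projRange {d : ℕ} (A : Mat d) : Mat d :=
  Matrix.toEuclideanLin.symm
    (((LinearMap.range (Matrix.toEuclideanLin A)).subtypeL.comp
      (Submodule.orthogonalProjectionOnto (LinearMap.range (Matrix.toEuclideanLin A)))).toLinearMap)

/-- The element of `ℝ²` with the two given coordinates. -/
def vec2 (a b : ℝ) : Vec 2 := WithLp.toLp 2 ![a, b]

/-- The Hessian matrix of `φ : ℝ^d → ℝ` at `x`. -/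
def hessMat {d : ℕ} (φ : Vec d → ℝ) (x : Vec d) : Mat d :=
  Matrix.of fun i j => fderiv ℝ (fun y => fderiv ℝ φ y (evec j)) x (evec i)

@[simp] lemma vec2_apply_zero (a b : ℝ) : vec2 a b 0 = a := rfl

@[simp] lemma vec2_apply_one (a b : ℝ) : vec2 a b 1 = b := rfl

lemma inner_vec2 (a b c d : ℝ) : ⟪vec2 a b, vec2 c d⟫ = a * c + b * d := by
  simp [vec2, PiLp.inner_apply, Fin.sum_univ_two, mul_comm]

lemma mv_vec2 (M : Mat 2) (a b : ℝ) :
    mv M (vec2 a b) = vec2 (M 0 0 * a + M 0 1 * b) (M 1 0 * a + M 1 1 * b) := by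
  ext i
  fin_cases i <;> simp [mv, vec2]

lemma vec2_eq_zero_iff {a b : ℝ} : vec2 a b = 0 ↔ a = 0 ∧ b = 0 := by
  refine ⟨fun h => ⟨congrArg (· 0) h, congrArg (· 1) h⟩, fun ⟨ha, hb⟩ => ?_⟩
  ext i
  fin_cases i <;> simp [ha, hb]

lemma forall_quadratic_nonneg_iff {a b c : ℝ} :
    (∀ x : ℝ, 0 ≤ a * x ^ 2 + b * x + c) ↔
      (0 < a ∧ b ^ 2 ≤ 4 * a * c) ∨ (a = 0 ∧ b = 0 ∧ 0 ≤ c) := by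
  constructor
  · intro h
    have hdisc : b ^ 2 - 4 * a * c ≤ 0 := by
      simpa [discrim] using discrim_le_zero fun x => (h x).trans_eq (by ring)
    have h0 := h 0
    have h1 := h 1
    have hm1 := h (-1)
    norm_num at h0 h1 hm1
    rcases lt_trichotomy a 0 with ha | rfl | ha
    · nlinarith
    · exact Or.inr ⟨rfl, by nlinarith, h0⟩
    · exact Or.inl ⟨ha, by linarith⟩
  · rintro (⟨ha, hd⟩ | ⟨rfl, rfl, hc⟩) x
    · nlinarith [sq_nonneg (2 * a * x + b)]
    · simpa using hc

lemma forall_drift_quadratic_nonneg_iff {bb0 bb1 bt0 bt1 bt2 α : ℝ} :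
    (∀ xb : ℝ, 0 ≤ (2*bb1 - bt2) * xb^2 + (bt1 + 2*bb0) * xb + (bt0 + α)) ↔
      ((bt2 < 2*bb1 ∧ (bt1 + 2*bb0)^2 ≤ 4*(2*bb1 - bt2)*(bt0 + α)) ∨
       (bt2 = 2*bb1 ∧ bt1 = -2*bb0 ∧ -α ≤ bt0)) := by
  rw [forall_quadratic_nonneg_iff, sub_pos, sub_eq_zero, eq_comm (a := 2*bb1),
    add_eq_zero_iff_eq_neg, ← neg_le_iff_add_nonneg, neg_mul]

lemma forall_affine_nonneg {b c : ℝ} (h : ∀ x : ℝ, 0 ≤ c + b * x) : b = 0 ∧ 0 ≤ c := by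
  have hq : ∀ x : ℝ, 0 ≤ 0 * x ^ 2 + b * x + c := fun x => (h x).trans_eq (by ring)
  rcases forall_quadratic_nonneg_iff.1 hq with ⟨h0, -⟩ | ⟨-, hb, hc⟩
  exacts [absurd h0 (lt_irrefl 0), ⟨hb, hc⟩]

lemma quartic_coeffs_eq_zero {a b c d e : ℝ}
    (h : ∀ x : ℝ, a + b * x + c * x ^ 2 + d * x ^ 3 + e * x ^ 4 = 0) :
    a = 0 ∧ b = 0 ∧ c = 0 ∧ d = 0 ∧ e = 0 := by
  have h0 := h 0; have h1 := h 1; have h2 := h 2; have h3 := h (-1); have h4 := h (-2)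
  norm_num at h0 h1 h2 h3 h4
  refine ⟨?_, ?_, ?_, ?_, ?_⟩ <;> linarith

lemma eq_zero_of_forall_sq_mul_le {a M : ℝ} (h : ∀ T > 0, a ^ 2 * T ≤ M) : a = 0 := by
  by_contra ha
  have hT := h ((|M| + 1) / a ^ 2) (by positivity)
  rw [mul_div_cancel₀ _ (by positivity)] at hT
  linarith [le_abs_self M]

lemma posSemidef_fin_two_of_sq_le_mul {a b c : ℝ} (ha : 0 ≤ a) (hc : 0 ≤ c)
    (hdet : b ^ 2 ≤ a * c) :
    (!![a, b; b, c]).PosSemidef := by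
  refine .of_dotProduct_mulVec_nonneg ?_ fun x => ?_
  · ext i j
    fin_cases i <;> fin_cases j <;> simp
  · simp only [star_trivial, dotProduct, Matrix.mulVec, Fin.sum_univ_two, Matrix.of_apply,
      Matrix.cons_val', Matrix.cons_val_zero, Matrix.cons_val_one, Matrix.empty_val',
      Matrix.cons_val_fin_one]
    rcases ha.eq_or_lt with rfl | ha
    · have hb : b = 0 := by nlinarith
      subst hb
      nlinarith [mul_nonneg hc (sq_nonneg (x 1))]
    · nlinarith [sq_nonneg (a * x 0 + b * x 1), mul_nonneg (sub_nonneg.2 hdet) (sq_nonneg (x 1))]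

lemma fderiv_quadratic_affine_apply (a b c d : ℝ) (x v : Vec 2) :
    fderiv ℝ (fun y : Vec 2 => a * y 0 ^ 2 + b * y 0 + c * y 1 + d) x v
      = (2 * a * x 0 + b) * v 0 + c * v 1 := by
  have hcoord (i : Fin 2) :
      HasFDerivAt (fun y : Vec 2 => y i) (PiLp.proj (𝕜 := ℝ) 2 (fun _ : Fin 2 => ℝ) i) x :=
    PiLp.hasFDerivAt_apply 2 x i
  have H : HasFDerivAt (fun y : Vec 2 => a * y 0 ^ 2 + b * y 0 + c * y 1 + d) _ x :=
    (((((hcoord 0).pow 2).const_mul a).add ((hcoord 0).const_mul b)).add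
      ((hcoord 1).const_mul c)).add_const d
  rw [H.fderiv]
  simp only [_root_.add_apply, _root_.smul_apply, PiLp.proj_apply, smul_eq_mul, nsmul_eq_mul]
  ring

lemma fderiv_quadratic_affine_evec_zero (a b c d : ℝ) (x : Vec 2) :
    fderiv ℝ (fun y : Vec 2 => a * y 0 ^ 2 + b * y 0 + c * y 1 + d) x (evec 0)
      = 2 * a * x 0 + b := by
  rw [fderiv_quadratic_affine_apply]
  simp [evec]

lemma fderiv_quadratic_affine_evec_one (a b c d : ℝ) (x : Vec 2) :
    fderiv ℝ (fun y : Vec 2 => a * y 0 ^ 2 + b * y 0 + c * y 1 + d) x (evec 1) = c := by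
  rw [fderiv_quadratic_affine_apply]
  simp [evec]

def parabolaCov (α β : ℝ) (p : Vec 2) : Mat 2 :=
  !![α, -2*α*(p 0); -2*α*(p 0), (4*α + β)*(p 0)^2 + β*(p 1)]

def boundaryDrift (b : Vec 2 → Vec 2) (C : Vec 2 → Mat 2) (xb : ℝ) : ℝ :=
  ⟪vec2 (2*xb) 1, b (vec2 xb (-xb^2))⟫ -
    (if C (vec2 xb (-xb^2)) 0 0 ≠ 0 then (1:ℝ) else 0) / (2 * (4*xb^2 + 1)) *
      ((2*xb) *
        (fderiv ℝ (fun y => C y 0 0 - C y 1 1) (vec2 xb (-xb^2)) (evec 0) -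
         2*xb * fderiv ℝ (fun y => C y 0 0 - C y 1 1) (vec2 xb (-xb^2)) (evec 1)) +
       (1 - 4*xb^2) *
        (fderiv ℝ (fun y => C y 0 1) (vec2 xb (-xb^2)) (evec 0) -
         2*xb * fderiv ℝ (fun y => C y 0 1) (vec2 xb (-xb^2)) (evec 1)))

section parabolaCov

variable {α β : ℝ}

lemma parabolaCov_posSemidef (hα : 0 ≤ α) (hβ : 0 ≤ β) {p : Vec 2} (hp : -(p 0)^2 ≤ p 1) :
    (parabolaCov α β p).PosSemidef :=
  posSemidef_fin_two_of_sq_le_mul hα (by nlinarith) (by nlinarith [mul_nonneg hα hβ])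

lemma mv_parabolaCov_boundary (xb : ℝ) :
    mv (parabolaCov α β (vec2 xb (-xb^2))) (vec2 (2*xb) 1) = 0 := by
  rw [mv_vec2, vec2_eq_zero_iff]
  simp only [parabolaCov, of_apply, cons_val', cons_val_zero, cons_val_one, cons_val_fin_one,
    vec2_apply_zero, vec2_apply_one]
  constructor <;> ring

lemma boundaryDrift_parabolaCov {bb0 bb1 bt0 bt1 bt2 : ℝ} {b : Vec 2 → Vec 2}
    (hb : ∀ p : Vec 2, b p = vec2 (bb0 + bb1 * p 0) (bt0 + bt1 * p 0 + bt2 * p 1)) (xb : ℝ) :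
    boundaryDrift b (parabolaCov α β) xb
      = (2*bb1 - bt2) * xb^2 + (bt1 + 2*bb0) * xb + (bt0 + α) := by
  have hdiag : (fun y => parabolaCov α β y 0 0 - parabolaCov α β y 1 1)
      = fun y => (-(4*α + β)) * y 0 ^ 2 + 0 * y 0 + (-β) * y 1 + α := by
    funext y
    show α - ((4*α + β) * y 0 ^ 2 + β * y 1) = _
    ring
  have hoff : (fun y => parabolaCov α β y 0 1)
      = fun y => 0 * y 0 ^ 2 + (-2*α) * y 0 + 0 * y 1 + 0 := by
    funext y
    show -2*α*y 0 = _
    ring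
  have h00 : parabolaCov α β (vec2 xb (-xb^2)) 0 0 = α := rfl
  simp only [boundaryDrift, hdiag, hoff, h00, fderiv_quadratic_affine_evec_zero,
    fderiv_quadratic_affine_evec_one, hb, inner_vec2, vec2_apply_zero, vec2_apply_one]
  split_ifs with hα
  · field_simp
    ring
  · rw [not_not.1 hα]
    ring

end parabolaCov

section quadraticField

variable {A0 A1 A2 A3 A4 A5 : Mat 2} {C : Vec 2 → Mat 2}

lemma apply_of_eq_quadratic
    (hC : ∀ p : Vec 2, C p =
      A0 + p 0 • A1 + p 1 • A2 + (p 0)^2 • A3 + (p 0 * p 1) • A4 + (p 1)^2 • A5)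
    (p : Vec 2) (i j : Fin 2) :
    C p i j = A0 i j + p 0 * A1 i j + p 1 * A2 i j
      + p 0 ^ 2 * A3 i j + p 0 * p 1 * A4 i j + p 1 ^ 2 * A5 i j := by
  simp [hC]

lemma isSymm_of_eq_quadratic
    (hA0 : A0.IsSymm) (hA1 : A1.IsSymm) (hA2 : A2.IsSymm)
    (hA3 : A3.IsSymm) (hA4 : A4.IsSymm) (hA5 : A5.IsSymm)
    (hC : ∀ p : Vec 2, C p =
      A0 + p 0 • A1 + p 1 • A2 + (p 0)^2 • A3 + (p 0 * p 1) • A4 + (p 1)^2 • A5)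
    (p : Vec 2) : (C p).IsSymm := by
  rw [hC]
  exact ((((hA0.add (hA1.smul _)).add (hA2.smul _)).add (hA3.smul _)).add (hA4.smul _)).add
    (hA5.smul _)

lemma apply_eq_of_boundary_kernel
    (hA0 : A0.IsSymm) (hA1 : A1.IsSymm) (hA2 : A2.IsSymm)
    (hA3 : A3.IsSymm) (hA4 : A4.IsSymm) (hA5 : A5.IsSymm)
    (hC : ∀ p : Vec 2, C p =
      A0 + p 0 • A1 + p 1 • A2 + (p 0)^2 • A3 + (p 0 * p 1) • A4 + (p 1)^2 • A5)
    {α : ℝ} (h00 : ∀ p : Vec 2, C p 0 0 = α)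
    (hker : ∀ xb : ℝ, mv (C (vec2 xb (-xb^2))) (vec2 (2*xb) 1) = 0) (p : Vec 2) :
    C p 0 1 = -2*α*p 0 + A2 0 1 * (p 1 + p 0 ^ 2) ∧
      C p 1 1 = 4*α*p 0 ^ 2 + A2 1 1 * (p 1 + p 0 ^ 2) := by
  have hentry := apply_of_eq_quadratic hC
  have hrow (xb : ℝ) : α * (2*xb) + C (vec2 xb (-xb^2)) 0 1 = 0 ∧
      C (vec2 xb (-xb^2)) 0 1 * (2*xb) + C (vec2 xb (-xb^2)) 1 1 = 0 := by
    have hsymm :=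
      (isSymm_of_eq_quadratic hA0 hA1 hA2 hA3 hA4 hA5 hC (vec2 xb (-xb^2))).apply 0 1
    simpa [mv_vec2, vec2_eq_zero_iff, hsymm, h00] using hker xb
  obtain ⟨a0, a1, a3, a4, a5⟩ := quartic_coeffs_eq_zero (a := A0 0 1) (b := A1 0 1 + 2*α)
      (c := A3 0 1 - A2 0 1) (d := -A4 0 1) (e := A5 0 1) fun xb => by
    have e := hentry (vec2 xb (-xb^2)) 0 1
    simp only [vec2_apply_zero, vec2_apply_one] at e
    linear_combination (hrow xb).1 - e
  obtain ⟨d0, d1, d3, d4, d5⟩ := quartic_coeffs_eq_zero (a := A0 1 1) (b := A1 1 1)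
      (c := A3 1 1 - A2 1 1 - 4*α) (d := -A4 1 1) (e := A5 1 1) fun xb => by
    have e := hentry (vec2 xb (-xb^2)) 1 1
    simp only [vec2_apply_zero, vec2_apply_one] at e
    linear_combination (hrow xb).2 - 2*xb*(hrow xb).1 - e
  constructor
  · rw [hentry]
    linear_combination a0 + p 0 * a1 + p 0 ^ 2 * a3 - p 0 * p 1 * a4 + p 1 ^ 2 * a5
  · rw [hentry]
    linear_combination d0 + p 0 * d1 + p 0 ^ 2 * d3 - p 0 * p 1 * d4 + p 1 ^ 2 * d5

lemma eq_parabolaCov_of_posSemidef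
    (hA0 : A0.IsSymm) (hA1 : A1.IsSymm) (hA2 : A2.IsSymm)
    (hA3 : A3.IsSymm) (hA4 : A4.IsSymm) (hA5 : A5.IsSymm)
    (hC : ∀ p : Vec 2, C p =
      A0 + p 0 • A1 + p 1 • A2 + (p 0)^2 • A3 + (p 0 * p 1) • A4 + (p 1)^2 • A5)
    (hC11affine : ∃ c0 c1 : ℝ, ∀ p : Vec 2, C p 0 0 = c0 + c1 * p 0)
    (hpsd : ∀ p : Vec 2, -(p 0)^2 ≤ p 1 → (C p).PosSemidef)
    (hker : ∀ xb : ℝ, mv (C (vec2 xb (-xb^2))) (vec2 (2*xb) 1) = 0) :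
    ∃ α : ℝ, 0 ≤ α ∧ ∃ β : ℝ, 0 ≤ β ∧ ∀ p, C p = parabolaCov α β p := by
  have hsymm (p : Vec 2) : C p 1 0 = C p 0 1 :=
    (isSymm_of_eq_quadratic hA0 hA1 hA2 hA3 hA4 hA5 hC p).apply 0 1
  obtain ⟨α, c1, h00⟩ := hC11affine
  obtain ⟨rfl, hα⟩ : c1 = 0 ∧ 0 ≤ α := forall_affine_nonneg fun u => by
    simpa [h00] using (hpsd (vec2 u 0) (by simp; positivity)).diag_nonneg (i := 0)
  simp only [zero_mul, add_zero] at h00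
  have hentry := apply_eq_of_boundary_kernel hA0 hA1 hA2 hA3 hA4 hA5 hC h00 hker
  have hβ : 0 ≤ A2 1 1 := by
    simpa [(hentry _).2] using (hpsd (vec2 0 1) (by simp)).diag_nonneg (i := 1)
  have ha2 : A2 0 1 = 0 := eq_zero_of_forall_sq_mul_le (M := α * A2 1 1) fun T hT => by
    have hdet := (hpsd (vec2 0 T) (by simp; positivity)).det_nonneg
    simp only [det_fin_two, hsymm, h00, hentry, vec2_apply_zero, vec2_apply_one] at hdet
    nlinarith
  refine ⟨α, hα, A2 1 1, hβ, fun p => ?_⟩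
  ext i j
  fin_cases i <;> fin_cases j
  · exact h00 p
  · simpa [parabolaCov, ha2] using (hentry p).1
  · simpa [parabolaCov, ha2, hsymm] using (hentry p).1
  · show C p 1 1 = (4*α + A2 1 1) * p 0 ^ 2 + A2 1 1 * p 1
    linear_combination (hentry p).2

end quadraticField

theorem stmt10 (bb0 bb1 bt0 bt1 bt2 : ℝ) (A0 A1 A2 A3 A4 A5 : Mat 2)
    (hA0 : A0.IsSymm) (hA1 : A1.IsSymm) (hA2 : A2.IsSymm)
    (hA3 : A3.IsSymm) (hA4 : A4.IsSymm) (hA5 : A5.IsSymm)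
    (b : Vec 2 → Vec 2)
    (hb : ∀ p : Vec 2, b p = vec2 (bb0 + bb1 * p 0) (bt0 + bt1 * p 0 + bt2 * p 1))
    (C : Vec 2 → Mat 2)
    (hC : ∀ p : Vec 2, C p =
      A0 + p 0 • A1 + p 1 • A2 + (p 0)^2 • A3 + (p 0 * p 1) • A4 + (p 1)^2 • A5)
    (hC11affine : ∃ c0 c1 : ℝ, ∀ p : Vec 2, C p 0 0 = c0 + c1 * p 0)
    (D : Set (Vec 2)) (hD : D = {p : Vec 2 | -(p 0)^2 ≤ p 1}) :
    ((∀ p ∈ D, (C p).PosSemidef) ∧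
      ∀ xb : ℝ,
        mv (C (vec2 xb (-xb^2))) (vec2 (2*xb) 1) = 0 ∧
        0 ≤ ⟪vec2 (2*xb) 1, b (vec2 xb (-xb^2))⟫ -
          (if C (vec2 xb (-xb^2)) 0 0 ≠ 0 then (1:ℝ) else 0) / (2 * (4*xb^2 + 1)) *
            ((2*xb) *
              (fderiv ℝ (fun y => C y 0 0 - C y 1 1) (vec2 xb (-xb^2)) (evec 0) -
               2*xb * fderiv ℝ (fun y => C y 0 0 - C y 1 1) (vec2 xb (-xb^2)) (evec 1)) +
             (1 - 4*xb^2) *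
              (fderiv ℝ (fun y => C y 0 1) (vec2 xb (-xb^2)) (evec 0) -
               2*xb * fderiv ℝ (fun y => C y 0 1) (vec2 xb (-xb^2)) (evec 1))))
    ↔
    (∃ α : ℝ, 0 ≤ α ∧ ∃ β : ℝ, 0 ≤ β ∧
      (∀ p : Vec 2, C p =
        !![α, -2*α*(p 0); -2*α*(p 0), (4*α + β)*(p 0)^2 + β*(p 1)]) ∧
      ((bt2 < 2*bb1 ∧ (bt1 + 2*bb0)^2 ≤ 4*(2*bb1 - bt2)*(bt0 + α)) ∨
       (bt2 = 2*bb1 ∧ bt1 = -2*bb0 ∧ -α ≤ bt0))) := by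
  subst hD
  simp only [← forall_drift_quadratic_nonneg_iff]
  constructor
  · rintro ⟨hpsd, hbdry⟩
    obtain ⟨α, hα, β, hβ, hs⟩ := eq_parabolaCov_of_posSemidef hA0 hA1 hA2 hA3 hA4 hA5 hC
      hC11affine hpsd fun xb => (hbdry xb).1
    obtain rfl : C = parabolaCov α β := funext hs
    refine ⟨α, hα, β, hβ, hs, fun xb => ?_⟩
    rw [← boundaryDrift_parabolaCov hb]
    exact (hbdry xb).2
  · rintro ⟨α, hα, β, hβ, hs, hq⟩
    obtain rfl : C = parabolaCov α β := funext hs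
    refine ⟨fun p hp => parabolaCov_posSemidef hα hβ hp,
      fun xb => ⟨mv_parabolaCov_boundary xb, ?_⟩⟩
    change 0 ≤ boundaryDrift b (parabolaCov α β) xb
    rw [boundaryDrift_parabolaCov hb]
    exact hq xb
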